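/- Let β > 0, 0 < α < 1, integer n ≥ 1, and g analytic on D. Then the following are equivalent: (i) I_g^{n,0}: B^α → B^β is bounded; (ii) I_g^{n,0}: B^α → B^β is compact; (iii) sup_{z∈D} (1-|z|²)^{n+β-1} |g(z)| < ∞. In particular, for 0 < α < 1 boundedness of I_g^{n,0} from B^α to B^β implies its compactness. -/

import Mathlib

open Complex Metric Filter Topology
open intervalIntegral Set MeasureTheory

noncomputable section

def UDisk : Set ℂ := Metric.ball 0 1

def bSemi (α : ℝ) (f : ℂ → ℂ) : ℝ :=
  ⨆ z : UDisk, (1 - ‖(z : ℂ)‖ ^ 2) ^ α * ‖deriv f (z : ℂ)‖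

def bNorm (α : ℝ) (f : ℂ → ℂ) : ℝ := ‖f 0‖ + bSemi α f

def MemBloch (α : ℝ) (f : ℂ → ℂ) : Prop :=
  DifferentiableOn ℂ f UDisk ∧
    ∃ C : ℝ, ∀ z ∈ UDisk, (1 - ‖z‖ ^ 2) ^ α * ‖deriv f z‖ ≤ C

def intOp (f : ℂ → ℂ) : ℂ → ℂ := fun z => z * ∫ t in (0:ℝ)..1, f (t * z)

def Ig (g : ℂ → ℂ) (n k : ℕ) (f : ℂ → ℂ) : ℂ → ℂ :=
  intOp^[n] (fun z => iteratedDeriv k f z * g z)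

def BoundedOp (α β : ℝ) (T : (ℂ → ℂ) → (ℂ → ℂ)) : Prop :=
  ∃ C > 0, ∀ f, MemBloch α f → MemBloch β (T f) ∧ bNorm β (T f) ≤ C * bNorm α f

def CompactOp (α β : ℝ) (T : (ℂ → ℂ) → (ℂ → ℂ)) : Prop :=
  BoundedOp α β T ∧
    ∀ (F : ℕ → ℂ → ℂ) (M : ℝ), (∀ j, MemBloch α (F j)) → (∀ j, bNorm α (F j) ≤ M) →
      ∃ (φ : ℕ → ℕ) (h : ℂ → ℂ), StrictMono φ ∧ MemBloch β h ∧
        Tendsto (fun j => bNorm β (T (F (φ j)) - h)) atTop (nhds 0)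

def fwi (α : ℝ) (i : ℕ) (w : ℂ) : ℂ → ℂ :=
  fun z => z ^ i / (1 - (starRingEnd ℂ) w * z) ^ ((α : ℂ) + (i : ℂ))

def Complex.abs : AbsoluteValue ℂ ℝ := IsAbsoluteValue.toAbsoluteValue (norm : ℂ → ℝ)

theorem Complex.norm_eq_abs (z : ℂ) : ‖z‖ = Complex.abs z := rfl

theorem Complex.abs_ofReal (r : ℝ) : Complex.abs (r : ℂ) = |r| := Complex.norm_real r

lemma mem_UDisk {z : ℂ} : z ∈ UDisk ↔ Complex.abs z < 1 := by
  simp [UDisk, Complex.dist_eq, Complex.norm_eq_abs]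

lemma zero_mem_UDisk : (0:ℂ) ∈ UDisk := by simp [mem_UDisk]

instance : Nonempty ↥UDisk := ⟨⟨0, zero_mem_UDisk⟩⟩

lemma isOpen_UDisk : IsOpen UDisk := isOpen_ball

lemma wpos {z : ℂ} (hz : z ∈ UDisk) : 0 < 1 - Complex.abs z ^ 2 := by
  rw [mem_UDisk] at hz
  nlinarith [Complex.abs.nonneg z]

lemma wle {z : ℂ} : 1 - Complex.abs z ^ 2 ≤ 1 := by
  nlinarith [Complex.abs.nonneg z]

lemma smul_mem_UDisk {z : ℂ} (hz : z ∈ UDisk) {t : ℝ} (h0 : 0 ≤ t) (h1 : t ≤ 1) :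
    (t : ℂ) * z ∈ UDisk := by
  rw [mem_UDisk] at hz ⊢
  rw [map_mul, Complex.abs_ofReal, _root_.abs_of_nonneg h0]
  calc t * Complex.abs z ≤ 1 * Complex.abs z := by
        exact mul_le_mul_of_nonneg_right h1 (Complex.abs.nonneg z)
    _ = Complex.abs z := one_mul _
    _ < 1 := hz

lemma deriv_diffOn {f : ℂ → ℂ} (hf : DifferentiableOn ℂ f UDisk) :
    DifferentiableOn ℂ (deriv f) UDisk :=
  (hf.analyticOnNhd isOpen_UDisk).deriv.differentiableOn

lemma deriv_contOn {f : ℂ → ℂ} (hf : DifferentiableOn ℂ f UDisk) :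
    ContinuousOn (deriv f) UDisk := (deriv_diffOn hf).continuousOn

lemma contOn_comp_smul {f : ℂ → ℂ} (hf : ContinuousOn f UDisk) {z : ℂ} (hz : z ∈ UDisk)
    {a b : ℝ} (ha : 0 ≤ a) (hb : b ≤ 1) (hab : a ≤ b) :
    ContinuousOn (fun t : ℝ => f ((t : ℂ) * z)) (Set.uIcc a b) := by
  rw [Set.uIcc_of_le hab]
  apply hf.comp
  · exact (Complex.continuous_ofReal.continuousOn.mul continuousOn_const)
  · intro t ht
    exact smul_mem_UDisk hz (le_trans ha ht.1) (le_trans ht.2 hb)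

lemma hasDerivAt_curve {f : ℂ → ℂ} (hf : DifferentiableOn ℂ f UDisk) {z : ℂ}
    (hz : z ∈ UDisk) {t : ℝ} (h0 : 0 ≤ t) (h1 : t ≤ 1) :
    HasDerivAt (fun s : ℝ => f ((s : ℂ) * z)) (z * deriv f ((t : ℂ) * z)) t := by
  have hm : (t : ℂ) * z ∈ UDisk := smul_mem_UDisk hz h0 h1
  have hfd : HasDerivAt f (deriv f ((t:ℂ)*z)) ((t:ℂ)*z) :=
    ((hf.differentiableAt (isOpen_UDisk.mem_nhds hm))).hasDerivAt
  have hi : HasDerivAt (fun w : ℂ => w * z) z (t : ℂ) := by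
    simpa using (hasDerivAt_id ((t:ℂ))).mul_const z
  have := (hfd.comp (t:ℂ) hi : HasDerivAt (fun w : ℂ => f (w * z)) _ (t:ℂ))
  have := this.comp_ofReal
  simpa [mul_comm] using this
variable {e : ℝ}

lemma le_mul_weight {a d M e : ℝ} (ha : 0 < a) (hd : 0 ≤ d) (h : a ^ e * d ≤ M) :
    d ≤ M * a ^ (-e) := by
  have hae : (0:ℝ) < a ^ e := Real.rpow_pos_of_pos ha e
  rw [Real.rpow_neg ha.le, ← div_eq_mul_inv, le_div_iff₀ hae]
  linarith [h, mul_comm d (a ^ e)]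

lemma weight_flip {a b e : ℝ} (ha : 0 < a) (hab : a ≤ b) (he : 0 ≤ e) :
    b ^ (-e) ≤ a ^ (-e) :=
  Real.rpow_le_rpow_of_nonpos ha hab (neg_nonpos.2 he)

lemma intervalIntegrable_oneSub_rpow {c : ℝ} (hc : -1 < c) (r s : ℝ) :
    IntervalIntegrable (fun t => (1 - t) ^ c) volume r s := by
  have h := (intervalIntegrable_rpow' (a := 1 - s) (b := 1 - r) hc).comp_sub_left 1
  simpa using h.symm

lemma integral_oneSub_rpow {c : ℝ} (hc : -1 < c) {r : ℝ} (hr : r ≤ 1) :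
    ∫ t in r..1, (1 - t) ^ c = (1 - r) ^ (c + 1) / (c + 1) := by
  have h := integral_comp_sub_left (a := r) (b := 1) (fun x : ℝ => x ^ c) 1
  rw [h]
  rw [integral_rpow (Or.inl hc)]
  rw [show (1:ℝ) - 1 = 0 by norm_num, Real.zero_rpow (by linarith : c + 1 ≠ 0)]
  ring

section RAD
variable {α : ℝ} {f : ℂ → ℂ} {M : ℝ}

lemma M_nonneg (hM : ∀ w ∈ UDisk, (1 - Complex.abs w ^ 2) ^ α * Complex.abs (deriv f w) ≤ M) :
    0 ≤ M := by
  have h := hM 0 zero_mem_UDisk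
  simp [Real.one_rpow] at h
  exact le_trans (Complex.abs.nonneg _) h

lemma rad_bound (hα0 : 0 < α) (hα1 : α < 1) (hf : DifferentiableOn ℂ f UDisk)
    (hM : ∀ w ∈ UDisk, (1 - Complex.abs w ^ 2) ^ α * Complex.abs (deriv f w) ≤ M)
    {z : ℂ} (hz : z ∈ UDisk) {r : ℝ} (h0 : 0 ≤ r) (h1 : r ≤ 1) :
    Complex.abs (f z - f ((r:ℂ) * z)) ≤ M * ((1 - r) ^ (1 - α) / (1 - α)) := by
  have hM0 : 0 ≤ M := M_nonneg hM
  have habz : Complex.abs z ≤ 1 := (mem_UDisk.1 hz).le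
  -- FTC
  have key : ∀ t ∈ Set.uIcc r 1, HasDerivAt (fun s : ℝ => f ((s : ℂ) * z))
      (z * deriv f ((t : ℂ) * z)) t := by
    intro t ht
    rw [Set.uIcc_of_le h1] at ht
    exact hasDerivAt_curve hf hz (le_trans h0 ht.1) ht.2
  have hint : IntervalIntegrable (fun t : ℝ => z * deriv f ((t : ℂ) * z)) volume r 1 := by
    exact (continuousOn_const.mul (contOn_comp_smul (deriv_contOn hf) hz h0 le_rfl h1)).intervalIntegrable
  have ftc := intervalIntegral.integral_eq_sub_of_hasDerivAt key hint
  have hone : f (((1:ℝ) : ℂ) * z) = f z := by norm_num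
  rw [hone] at ftc
  -- bound
  have hae : ∀ᵐ (t : ℝ) ∂(volume.restrict (Set.uIoc r 1)),
      ‖z * deriv f ((t : ℂ) * z)‖ ≤ M * (1 - t) ^ (-α) := by
    have hne : ∀ᵐ (t : ℝ) ∂volume, t ≠ 1 := by
      refine MeasureTheory.ae_iff.2 ?_
      simpa using measure_singleton (1 : ℝ)
    filter_upwards [MeasureTheory.ae_restrict_of_ae hne,
      MeasureTheory.ae_restrict_mem measurableSet_uIoc] with t ht1 htm
    rw [Set.uIoc_of_le h1] at htm
    have ht0 : 0 ≤ t := le_trans h0 htm.1.le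
    have htlt : t < 1 := lt_of_le_of_ne htm.2 ht1
    have hmem : (t : ℂ) * z ∈ UDisk := smul_mem_UDisk hz ht0 htm.2
    have hd : Complex.abs (deriv f ((t:ℂ)*z)) ≤ M * (1 - Complex.abs ((t:ℂ)*z) ^ 2) ^ (-α) :=
      le_mul_weight (wpos hmem) (Complex.abs.nonneg _) (hM _ hmem)
    have hflip : (1 - Complex.abs ((t:ℂ)*z) ^ 2) ^ (-α) ≤ (1 - t) ^ (-α) := by
      apply weight_flip (by linarith) _ hα0.le
      have : Complex.abs ((t:ℂ)*z) ^ 2 ≤ t := by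
        rw [map_mul, Complex.abs_ofReal, _root_.abs_of_nonneg ht0]
        have hz2 : Complex.abs z ^ 2 ≤ 1 := by nlinarith [Complex.abs.nonneg z]
        have h1' : (t * Complex.abs z) ^ 2 ≤ t ^ 2 := by nlinarith [sq_nonneg t]
        nlinarith
      linarith
    have : ‖z * deriv f ((t:ℂ)*z)‖ = Complex.abs z * Complex.abs (deriv f ((t:ℂ)*z)) := by
      rw [Complex.norm_eq_abs, map_mul]
    rw [this]
    calc Complex.abs z * Complex.abs (deriv f ((t:ℂ)*z))
        ≤ 1 * (M * (1 - Complex.abs ((t:ℂ)*z) ^ 2) ^ (-α)) := by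
          exact mul_le_mul habz hd (Complex.abs.nonneg _) one_pos.le
      _ = M * (1 - Complex.abs ((t:ℂ)*z) ^ 2) ^ (-α) := one_mul _
      _ ≤ M * (1 - t) ^ (-α) := by exact mul_le_mul_of_nonneg_left hflip hM0
  have hgint : IntervalIntegrable (fun t : ℝ => M * (1 - t) ^ (-α)) volume r 1 :=
    (intervalIntegrable_oneSub_rpow (by linarith) r 1).const_mul M
  have hle := intervalIntegral.norm_integral_le_abs_of_norm_le hae hgint
  rw [ftc] at hle
  have hval : ∫ t in r..1, M * (1 - t) ^ (-α) = M * ((1 - r) ^ (1 - α) / (1 - α)) := by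
    rw [intervalIntegral.integral_const_mul, integral_oneSub_rpow (by linarith) h1,
      show -α + 1 = 1 - α by ring]
  rw [hval, _root_.abs_of_nonneg (mul_nonneg hM0 (div_nonneg
    (Real.rpow_nonneg (by linarith) _) (by linarith)))] at hle
  simpa [Complex.norm_eq_abs] using hle

lemma sup_bound (hα0 : 0 < α) (hα1 : α < 1) (hf : DifferentiableOn ℂ f UDisk)
    (hM : ∀ w ∈ UDisk, (1 - Complex.abs w ^ 2) ^ α * Complex.abs (deriv f w) ≤ M)
    {z : ℂ} (hz : z ∈ UDisk) :
    Complex.abs (f z) ≤ Complex.abs (f 0) + M / (1 - α) := by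
  have h := rad_bound hα0 hα1 hf hM hz (le_refl (0:ℝ)) zero_le_one
  have h0 : ((0:ℝ):ℂ) * z = 0 := by norm_num
  rw [h0] at h
  have h2 : ((1:ℝ) - 0) ^ (1 - α) = 1 := by norm_num
  rw [h2] at h
  calc Complex.abs (f z) = Complex.abs (f z - f 0 + f 0) := by ring_nf
    _ ≤ Complex.abs (f z - f 0) + Complex.abs (f 0) := Complex.abs.add_le _ _
    _ ≤ M * (1 / (1 - α)) + Complex.abs (f 0) := by linarith
    _ = Complex.abs (f 0) + M / (1 - α) := by ring

lemma equi_bound (hα0 : 0 < α) (hα1 : α < 1) (hf : DifferentiableOn ℂ f UDisk)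
    (hM : ∀ w ∈ UDisk, (1 - Complex.abs w ^ 2) ^ α * Complex.abs (deriv f w) ≤ M)
    {z w : ℂ} (hz : z ∈ UDisk) (hw : w ∈ UDisk) {δ : ℝ} (hδ0 : 0 < δ) (hδ1 : δ ≤ 1)
    (hzw : Complex.abs (z - w) ≤ δ) :
    Complex.abs (f z - f w) ≤ M * (2 / (1 - α) + 1) * δ ^ (1 - α) := by
  have hM0 : 0 ≤ M := M_nonneg hM
  set r : ℝ := 1 - δ with hr
  have hr0 : 0 ≤ r := by simp [hr]; linarith
  have hr1 : r ≤ 1 := by simp [hr]; linarith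
  have hA := rad_bound hα0 hα1 hf hM hz hr0 hr1
  have hB := rad_bound hα0 hα1 hf hM hw hr0 hr1
  have hrr : (1:ℝ) - r = δ := by simp [hr]
  rw [hrr] at hA hB
  -- middle bound on closed ball of radius r
  have hsub : closedBall (0:ℂ) r ⊆ UDisk := by
    apply closedBall_subset_ball; linarith
  have hmid : Complex.abs (f ((r:ℂ)*z) - f ((r:ℂ)*w)) ≤ M * δ ^ (-α) * δ := by
    have hdb : ∀ x ∈ closedBall (0:ℂ) r, ‖deriv f x‖ ≤ M * δ ^ (-α) := by
      intro x hx
      have hxD : x ∈ UDisk := hsub hx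
      have h1 : Complex.abs (deriv f x) ≤ M * (1 - Complex.abs x ^ 2) ^ (-α) :=
        le_mul_weight (wpos hxD) (Complex.abs.nonneg _) (hM x hxD)
      have habx : Complex.abs x ≤ r := by simpa [Complex.dist_eq, Complex.norm_eq_abs] using hx
      have hflip : (1 - Complex.abs x ^ 2) ^ (-α) ≤ δ ^ (-α) := by
        apply weight_flip hδ0 _ hα0.le
        nlinarith [Complex.abs.nonneg x, mem_UDisk.1 hxD]
      rw [Complex.norm_eq_abs]
      calc Complex.abs (deriv f x) ≤ M * (1 - Complex.abs x ^ 2) ^ (-α) := h1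
        _ ≤ M * δ ^ (-α) := mul_le_mul_of_nonneg_left hflip hM0
    have hmem1 : (r:ℂ)*z ∈ closedBall (0:ℂ) r := by
      simp only [Metric.mem_closedBall, Complex.dist_eq, Complex.norm_eq_abs, sub_zero, map_mul, Complex.abs_ofReal,
        _root_.abs_of_nonneg hr0]
      nlinarith [Complex.abs.nonneg z, (mem_UDisk.1 hz).le]
    have hmem2 : (r:ℂ)*w ∈ closedBall (0:ℂ) r := by
      simp only [Metric.mem_closedBall, Complex.dist_eq, Complex.norm_eq_abs, sub_zero, map_mul, Complex.abs_ofReal,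
        _root_.abs_of_nonneg hr0]
      nlinarith [Complex.abs.nonneg w, (mem_UDisk.1 hw).le]
    have hdiff : ∀ x ∈ closedBall (0:ℂ) r, DifferentiableAt ℂ f x := fun x hx =>
      hf.differentiableAt (isOpen_UDisk.mem_nhds (hsub hx))
    have := (convex_closedBall (0:ℂ) r).norm_image_sub_le_of_norm_deriv_le hdiff hdb hmem2 hmem1
    rw [Complex.norm_eq_abs, Complex.norm_eq_abs] at this
    calc Complex.abs (f ((r:ℂ)*z) - f ((r:ℂ)*w)) ≤ M * δ ^ (-α) * Complex.abs ((r:ℂ)*z - (r:ℂ)*w) := this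
      _ ≤ M * δ ^ (-α) * δ := by
          apply mul_le_mul_of_nonneg_left _ (by positivity)
          have : (r:ℂ)*z - (r:ℂ)*w = (r:ℂ)*(z-w) := by ring
          rw [this, map_mul, Complex.abs_ofReal, _root_.abs_of_nonneg hr0]
          nlinarith [Complex.abs.nonneg (z - w)]
  have hδpow : M * δ ^ (-α) * δ = M * δ ^ (1 - α) := by
    rw [mul_assoc]
    congr 1
    have h2 := Real.rpow_add hδ0 (-α) 1
    rw [Real.rpow_one] at h2
    rw [← h2, show -α + 1 = 1 - α by ring]
  rw [hδpow] at hmid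
  calc Complex.abs (f z - f w)
      = Complex.abs ((f z - f ((r:ℂ)*z)) + (f ((r:ℂ)*z) - f ((r:ℂ)*w)) + (f ((r:ℂ)*w) - f w)) := by
        ring_nf
    _ ≤ Complex.abs ((f z - f ((r:ℂ)*z)) + (f ((r:ℂ)*z) - f ((r:ℂ)*w))) + Complex.abs (f ((r:ℂ)*w) - f w) :=
        Complex.abs.add_le _ _
    _ ≤ Complex.abs (f z - f ((r:ℂ)*z)) + Complex.abs (f ((r:ℂ)*z) - f ((r:ℂ)*w)) + Complex.abs (f ((r:ℂ)*w) - f w) := by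
        have := Complex.abs.add_le (f z - f ((r:ℂ)*z)) (f ((r:ℂ)*z) - f ((r:ℂ)*w))
        linarith
    _ ≤ M * (δ ^ (1-α) / (1-α)) + M * δ ^ (1-α) + M * (δ ^ (1-α) / (1-α)) := by
        have hBw : Complex.abs (f ((r:ℂ)*w) - f w) = Complex.abs (f w - f ((r:ℂ)*w)) := by
          rw [← Complex.abs.map_neg]; ring_nf
        rw [hBw]
        linarith
    _ = M * (2 / (1 - α) + 1) * δ ^ (1 - α) := by ring

end RAD

section INTOP

lemma intOp_eq (F : ℂ → ℂ) : intOp F = fun z => ∫ t in (0:ℝ)..1, z * F ((t:ℂ) * z) := by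
  funext z
  rw [intOp]
  rw [show (z * ∫ t in (0:ℝ)..1, F ((t:ℂ) * z)) = z • ∫ t in (0:ℝ)..1, F ((t:ℂ) * z) from rfl,
    ← intervalIntegral.integral_smul]
  simp [smul_eq_mul]

lemma intOp_zero (F : ℂ → ℂ) : intOp F 0 = 0 := by simp [intOp]

lemma uIoc_sub_uIcc : Set.uIoc (0:ℝ) 1 ⊆ Set.uIcc (0:ℝ) 1 := by
  rw [Set.uIoc_of_le zero_le_one, Set.uIcc_of_le zero_le_one]
  exact Set.Ioc_subset_Icc_self

lemma hasDerivAt_intOp {F : ℂ → ℂ} (hF : DifferentiableOn ℂ F UDisk) {z₀ : ℂ}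
    (hz : z₀ ∈ UDisk) : HasDerivAt (intOp F) (F z₀) z₀ := by
  have habs := mem_UDisk.1 hz
  set R : ℝ := (1 + Complex.abs z₀) / 2 with hR
  have hR1 : R < 1 := by rw [hR]; linarith
  have hzR : Complex.abs z₀ < R := by rw [hR]; linarith [Complex.abs.nonneg z₀]
  set ε : ℝ := R - Complex.abs z₀ with hε
  have hε0 : 0 < ε := by rw [hε]; linarith
  have hsubR : closedBall (0:ℂ) R ⊆ UDisk := closedBall_subset_ball hR1
  have hballmem : ∀ x ∈ ball z₀ ε, ∀ t : ℝ, t ∈ Set.Icc (0:ℝ) 1 →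
      (t:ℂ) * x ∈ closedBall (0:ℂ) R := by
    intro x hx t ht
    have hxa : Complex.abs x < R := by
      have := mem_ball.1 hx
      rw [Complex.dist_eq, Complex.norm_eq_abs] at this
      calc Complex.abs x = Complex.abs (x - z₀ + z₀) := by ring_nf
        _ ≤ Complex.abs (x - z₀) + Complex.abs z₀ := Complex.abs.add_le _ _
        _ < ε + Complex.abs z₀ := by linarith
        _ = R := by rw [hε]; ring
    simp only [Metric.mem_closedBall, Complex.dist_eq, Complex.norm_eq_abs, sub_zero, map_mul, Complex.abs_ofReal]
    rw [_root_.abs_of_nonneg ht.1]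
    nlinarith [Complex.abs.nonneg x, ht.2]
  have hballD : ∀ x ∈ ball z₀ ε, x ∈ UDisk := by
    intro x hx
    have := hballmem x hx 1 ⟨zero_le_one, le_rfl⟩
    rw [mem_UDisk]
    have h2 := hsubR this
    rw [mem_UDisk] at h2
    simpa using h2
  -- bounds
  obtain ⟨B1, hB1⟩ := isCompact_closedBall (0:ℂ) R |>.exists_bound_of_continuousOn
    (hF.continuousOn.mono hsubR)
  obtain ⟨B2, hB2⟩ := isCompact_closedBall (0:ℂ) R |>.exists_bound_of_continuousOn
    ((deriv_contOn hF).mono hsubR)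
  have hB10 : 0 ≤ B1 := le_trans (norm_nonneg _) (hB1 0 (mem_closedBall_self (by linarith [Complex.abs.nonneg z₀])))
  have hB20 : 0 ≤ B2 := le_trans (norm_nonneg _) (hB2 0 (mem_closedBall_self (by linarith [Complex.abs.nonneg z₀])))
  have key := intervalIntegral.hasDerivAt_integral_of_dominated_loc_of_deriv_le
    (μ := MeasureTheory.volume) (a := (0:ℝ)) (b := 1)
    (F := fun (x : ℂ) (t : ℝ) => x * F ((t:ℂ) * x))
    (F' := fun (x : ℂ) (t : ℝ) => F ((t:ℂ) * x) + (t:ℂ) * x * deriv F ((t:ℂ) * x))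
    (x₀ := z₀) (bound := fun _ => B1 + B2) (ball_mem_nhds z₀ hε0) ?meas ?int ?meas' ?bnd ?bint ?diff
  case meas =>
    filter_upwards [isOpen_ball.mem_nhds (mem_ball_self hε0)] with x hx
    apply ContinuousOn.aestronglyMeasurable _ measurableSet_uIoc
    apply ContinuousOn.mono _ uIoc_sub_uIcc
    exact continuousOn_const.mul (contOn_comp_smul hF.continuousOn (hballD x hx)
      le_rfl le_rfl zero_le_one)
  case int =>
    exact (continuousOn_const.mul (contOn_comp_smul hF.continuousOn hz
      le_rfl le_rfl zero_le_one)).intervalIntegrable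
  case meas' =>
    apply ContinuousOn.aestronglyMeasurable _ measurableSet_uIoc
    apply ContinuousOn.mono _ uIoc_sub_uIcc
    apply ContinuousOn.add
    · exact contOn_comp_smul hF.continuousOn hz le_rfl le_rfl zero_le_one
    · exact ((Complex.continuous_ofReal.continuousOn.mul continuousOn_const).mul
        (contOn_comp_smul (deriv_contOn hF) hz le_rfl le_rfl zero_le_one))
  case bnd =>
    apply MeasureTheory.ae_of_all
    intro t ht x hx
    have ht' : t ∈ Set.Icc (0:ℝ) 1 := by
      rw [Set.uIoc_of_le zero_le_one] at ht; exact ⟨ht.1.le, ht.2⟩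
    have hmem := hballmem x hx t ht'
    have h1 := hB1 _ hmem
    have h2 := hB2 _ hmem
    rw [Complex.norm_eq_abs] at h1 h2 ⊢
    have habsx : Complex.abs x ≤ 1 := by
      have := hsubR (hballmem x hx 1 ⟨zero_le_one, le_rfl⟩)
      rw [mem_UDisk] at this; simpa using this.le
    calc Complex.abs (F ((t:ℂ)*x) + (t:ℂ)*x*deriv F ((t:ℂ)*x))
        ≤ Complex.abs (F ((t:ℂ)*x)) + Complex.abs ((t:ℂ)*x*deriv F ((t:ℂ)*x)) := Complex.abs.add_le _ _
      _ ≤ B1 + B2 := by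
          have : Complex.abs ((t:ℂ)*x*deriv F ((t:ℂ)*x)) ≤ B2 := by
            rw [map_mul, map_mul, Complex.abs_ofReal, _root_.abs_of_nonneg ht'.1]
            calc t * Complex.abs x * Complex.abs (deriv F ((t:ℂ)*x))
                ≤ 1 * 1 * B2 := by
                  apply mul_le_mul (by
                    apply mul_le_mul ht'.2 habsx (Complex.abs.nonneg x) zero_le_one) h2
                    (Complex.abs.nonneg _) (by norm_num)
              _ = B2 := by ring
          linarith
  case bint => exact intervalIntegrable_const
  case diff =>
    apply MeasureTheory.ae_of_all
    intro t ht x hx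
    have ht' : t ∈ Set.Icc (0:ℝ) 1 := by
      rw [Set.uIoc_of_le zero_le_one] at ht; exact ⟨ht.1.le, ht.2⟩
    have hmemD : (t:ℂ) * x ∈ UDisk := hsubR (hballmem x hx t ht')
    have hinner : HasDerivAt (fun y : ℂ => F ((t:ℂ) * y)) (deriv F ((t:ℂ)*x) * (t:ℂ)) x := by
      have hu : HasDerivAt (fun y : ℂ => (t:ℂ) * y) ((t:ℂ)) x := by
        simpa using (hasDerivAt_id x).const_mul ((t:ℂ))
      exact ((hF.differentiableAt (isOpen_UDisk.mem_nhds hmemD)).hasDerivAt).comp x hu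
    have := (hasDerivAt_id x).mul hinner
    refine this.congr_deriv ?_
    simp only [id_eq, one_mul]; ring
  obtain ⟨-, hkey⟩ := key
  rw [intOp_eq]
  have hfun : HasDerivAt (fun x => ∫ t in (0:ℝ)..1, x * F ((t:ℂ)*x))
      (∫ t in (0:ℝ)..1, (F ((t:ℂ)*z₀) + (t:ℂ)*z₀*deriv F ((t:ℂ)*z₀))) z₀ := hkey
  have hval : (∫ t in (0:ℝ)..1, (F ((t:ℂ)*z₀) + (t:ℂ)*z₀*deriv F ((t:ℂ)*z₀))) = F z₀ := by
    have hψ : ∀ t ∈ Set.uIcc (0:ℝ) 1, HasDerivAt (fun s : ℝ => (s:ℂ) * F ((s:ℂ)*z₀))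
        (F ((t:ℂ)*z₀) + (t:ℂ)*z₀*deriv F ((t:ℂ)*z₀)) t := by
      intro t ht
      rw [Set.uIcc_of_le zero_le_one] at ht
      have h1 : HasDerivAt (fun s : ℝ => ((s:ℝ):ℂ)) 1 t := Complex.ofRealCLM.hasDerivAt
      have h2 := hasDerivAt_curve hF hz ht.1 ht.2
      have := h1.mul h2
      refine this.congr_deriv ?_
      simp only [id_eq, one_mul]; ring
    have hcont : IntervalIntegrable (fun t : ℝ => F ((t:ℂ)*z₀) + (t:ℂ)*z₀*deriv F ((t:ℂ)*z₀))
        MeasureTheory.volume 0 1 := by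
      apply ContinuousOn.intervalIntegrable
      apply ContinuousOn.add
      · exact contOn_comp_smul hF.continuousOn hz le_rfl le_rfl zero_le_one
      · exact ((Complex.continuous_ofReal.continuousOn.mul continuousOn_const).mul
          (contOn_comp_smul (deriv_contOn hF) hz le_rfl le_rfl zero_le_one))
    rw [intervalIntegral.integral_eq_sub_of_hasDerivAt hψ hcont]
    norm_num
  rw [hval] at hfun
  exact hfun

lemma intOp_diffOn {F : ℂ → ℂ} (hF : DifferentiableOn ℂ F UDisk) :
    DifferentiableOn ℂ (intOp F) UDisk := fun z hz =>
  ((hasDerivAt_intOp hF hz).differentiableAt).differentiableWithinAt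

lemma deriv_intOp {F : ℂ → ℂ} (hF : DifferentiableOn ℂ F UDisk) {z : ℂ} (hz : z ∈ UDisk) :
    deriv (intOp F) z = F z := (hasDerivAt_intOp hF hz).deriv

end INTOP

section ITER

lemma iter_diffOn {F : ℂ → ℂ} (hF : DifferentiableOn ℂ F UDisk) (m : ℕ) :
    DifferentiableOn ℂ (intOp^[m] F) UDisk := by
  induction m with
  | zero => simpa using hF
  | succ k ih =>
    rw [Function.iterate_succ_apply']
    exact intOp_diffOn ih

lemma iter_zero_at0 {F : ℂ → ℂ} {m : ℕ} (hm : 1 ≤ m) : intOp^[m] F 0 = 0 := by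
  obtain ⟨k, rfl⟩ := Nat.exists_eq_add_of_le hm
  rw [Nat.add_comm, Function.iterate_succ_apply']
  exact intOp_zero _

lemma deriv_iter {F : ℂ → ℂ} (hF : DifferentiableOn ℂ F UDisk) (m : ℕ) {z : ℂ}
    (hz : z ∈ UDisk) : deriv (intOp^[m+1] F) z = intOp^[m] F z := by
  rw [Function.iterate_succ_apply']
  exact deriv_intOp (iter_diffOn hF m) hz

lemma iter_sub {a b : ℂ → ℂ} (ha : DifferentiableOn ℂ a UDisk)
    (hb : DifferentiableOn ℂ b UDisk) (m : ℕ) :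
    ∀ z ∈ UDisk, intOp^[m] a z - intOp^[m] b z = intOp^[m] (a - b) z := by
  induction m with
  | zero => intro z _; simp
  | succ k ih =>
    intro z hz
    rw [Function.iterate_succ_apply', Function.iterate_succ_apply',
      Function.iterate_succ_apply']
    rw [intOp, intOp, intOp]
    have hia : IntervalIntegrable (fun t : ℝ => intOp^[k] a ((t:ℂ)*z)) MeasureTheory.volume 0 1 :=
      (contOn_comp_smul (iter_diffOn ha k).continuousOn hz le_rfl le_rfl
        zero_le_one).intervalIntegrable
    have hib : IntervalIntegrable (fun t : ℝ => intOp^[k] b ((t:ℂ)*z)) MeasureTheory.volume 0 1 :=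
      (contOn_comp_smul (iter_diffOn hb k).continuousOn hz le_rfl le_rfl
        zero_le_one).intervalIntegrable
    have : (∫ t in (0:ℝ)..1, intOp^[k] (a - b) ((t:ℂ)*z))
        = ∫ t in (0:ℝ)..1, (intOp^[k] a ((t:ℂ)*z) - intOp^[k] b ((t:ℂ)*z)) := by
      apply intervalIntegral.integral_congr
      intro t ht
      rw [Set.uIcc_of_le zero_le_one] at ht
      exact (ih _ (smul_mem_UDisk hz ht.1 ht.2)).symm
    rw [this, intervalIntegral.integral_sub hia hib]
    ring

end ITER

section DECAY

lemma decay_intOp {F : ℂ → ℂ} (hF : DifferentiableOn ℂ F UDisk) {γ : ℝ} (hγ : 1 < γ)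
    {Dc : ℝ} (hDc : 0 ≤ Dc)
    (hFb : ∀ w ∈ UDisk, Complex.abs (F w) ≤ Dc * (1 - Complex.abs w ^ 2) ^ (-γ)) :
    ∀ z ∈ UDisk, Complex.abs (intOp F z) ≤
      (Dc * 2 ^ (γ-1) / (γ-1)) * (1 - Complex.abs z ^ 2) ^ (-(γ-1)) := by
  intro z hz
  set r : ℝ := Complex.abs z with hrdef
  have hr0 : 0 ≤ r := Complex.abs.nonneg z
  have hr1 : r < 1 := mem_UDisk.1 hz
  have hγ0 : (0:ℝ) < γ - 1 := by linarith
  have hbound : ∀ t ∈ Set.uIcc (0:ℝ) 1, ‖z * F ((t:ℂ)*z)‖ ≤ Dc * (r * (1 - t*r) ^ (-γ)) := by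
    intro t ht
    rw [Set.uIcc_of_le zero_le_one] at ht
    have hmem : (t:ℂ)*z ∈ UDisk := smul_mem_UDisk hz ht.1 ht.2
    have h1 : Complex.abs (F ((t:ℂ)*z)) ≤ Dc * (1 - Complex.abs ((t:ℂ)*z) ^ 2) ^ (-γ) :=
      hFb _ hmem
    have htr : 0 < 1 - t*r := by nlinarith [ht.1, ht.2]
    have htr1 : t * r ≤ 1 := by nlinarith [ht.1, ht.2]
    have hflip : (1 - Complex.abs ((t:ℂ)*z) ^ 2) ^ (-γ) ≤ (1 - t*r) ^ (-γ) := by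
      apply weight_flip htr _ (by linarith)
      have : Complex.abs ((t:ℂ)*z) ^ 2 ≤ t * r := by
        rw [map_mul, Complex.abs_ofReal, _root_.abs_of_nonneg ht.1]
        nlinarith [mul_nonneg (mul_nonneg ht.1 hr0) (sub_nonneg.2 htr1)]
      linarith
    rw [Complex.norm_eq_abs, map_mul]
    calc Complex.abs z * Complex.abs (F ((t:ℂ)*z))
        ≤ r * (Dc * (1 - t*r) ^ (-γ)) := by
          apply mul_le_mul le_rfl (le_trans h1 (mul_le_mul_of_nonneg_left hflip hDc))
            (Complex.abs.nonneg _) hr0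
      _ = Dc * (r * (1 - t*r) ^ (-γ)) := by ring
  have hanti : ∀ t ∈ Set.uIcc (0:ℝ) 1, HasDerivAt (fun t : ℝ => ((1 - t*r) ^ (1-γ)) / (γ-1))
      (r * (1 - t*r) ^ (-γ)) t := by
    intro t ht
    rw [Set.uIcc_of_le zero_le_one] at ht
    have htr : 0 < 1 - t*r := by nlinarith [ht.1, ht.2]
    have hin : HasDerivAt (fun t : ℝ => 1 - t*r) (-r) t := by
      simpa using ((hasDerivAt_id t).mul_const r).const_sub 1
    have hout := Real.hasDerivAt_rpow_const (x := 1 - t*r) (p := 1-γ) (Or.inl htr.ne')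
    have hcomp : HasDerivAt (fun t : ℝ => (1 - t*r) ^ (1-γ))
        ((1-γ) * (1 - t*r) ^ (1-γ-1) * -r) t := (hout.comp t hin :)
    have hfin := hcomp.div_const (γ-1)
    refine hfin.congr_deriv ?_
    rw [show (1-γ-1:ℝ) = -γ by ring]
    have hne : γ - 1 ≠ 0 := hγ0.ne'
    field_simp
    ring
  have hgint : IntervalIntegrable (fun t : ℝ => r * (1 - t*r) ^ (-γ)) MeasureTheory.volume 0 1 := by
    apply ContinuousOn.intervalIntegrable
    apply ContinuousOn.mul continuousOn_const
    apply ContinuousOn.rpow_const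
    · exact (continuousOn_const.sub ((continuousOn_id).mul continuousOn_const))
    · intro t ht
      rw [Set.uIcc_of_le zero_le_one] at ht
      left
      have : 0 < 1 - t*r := by nlinarith [ht.1, ht.2]
      exact this.ne'
  have hval : (∫ t in (0:ℝ)..1, r * (1 - t*r) ^ (-γ))
      = ((1-r) ^ (1-γ) - 1) / (γ-1) := by
    rw [intervalIntegral.integral_eq_sub_of_hasDerivAt hanti hgint]
    simp only [one_mul, zero_mul, sub_zero]
    rw [Real.one_rpow]
    ring
  have hone_le : (1:ℝ) ≤ (1-r) ^ (1-γ) := by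
    have := Real.rpow_le_rpow_of_nonpos (by linarith : (0:ℝ) < 1 - r) (by linarith : 1 - r ≤ 1)
      (by linarith : 1 - γ ≤ 0)
    simpa [Real.one_rpow] using this
  have hle := intervalIntegral.norm_integral_le_abs_of_norm_le (f := fun t => z * F ((t:ℂ)*z))
    (g := fun t => Dc * (r * (1 - t*r) ^ (-γ)))
    (by
      filter_upwards [MeasureTheory.ae_restrict_mem measurableSet_uIoc] with t ht
      exact hbound t (uIoc_sub_uIcc ht)) (hgint.const_mul Dc)
  have hval2 : (∫ t in (0:ℝ)..1, Dc * (r * (1 - t*r) ^ (-γ)))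
      = Dc * (((1-r) ^ (1-γ) - 1) / (γ-1)) := by
    rw [intervalIntegral.integral_const_mul, hval]
  rw [hval2, _root_.abs_of_nonneg (mul_nonneg hDc (div_nonneg (by linarith) hγ0.le))] at hle
  have heq : Complex.abs (intOp F z) = ‖∫ t in (0:ℝ)..1, z * F ((t:ℂ)*z)‖ := by
    rw [congrFun (intOp_eq F) z, Complex.norm_eq_abs]
  rw [heq]
  apply le_trans hle
  -- final numeric estimate
  have h1r : (0:ℝ) < 1 - r := by linarith
  have h1r2 : (0:ℝ) < 1 - r^2 := by nlinarith
  have e2 : (1 - r^2)/2 ≤ 1 - r := by nlinarith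
  have e3 : (1-r) ^ (-(γ-1)) ≤ ((1-r^2)/2) ^ (-(γ-1)) :=
    weight_flip (by linarith) e2 hγ0.le
  have e4 : ((1-r^2)/2) ^ (-(γ-1)) = (1-r^2) ^ (-(γ-1)) * 2 ^ (γ-1) := by
    rw [Real.div_rpow h1r2.le (by norm_num : (0:ℝ) ≤ 2), div_eq_mul_inv,
      ← Real.rpow_neg (by norm_num : (0:ℝ) ≤ 2)]
    rw [show -(γ-1) = γ - 1 - (γ-1) - (γ-1) by ring]
    ring_nf
  have hkey : (1-r) ^ (1-γ) ≤ 2 ^ (γ-1) * (1 - r^2) ^ (-(γ-1)) := by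
    rw [show (1-γ:ℝ) = -(γ-1) by ring]
    calc (1-r) ^ (-(γ-1)) ≤ ((1-r^2)/2) ^ (-(γ-1)) := e3
      _ = 2 ^ (γ-1) * (1 - r^2) ^ (-(γ-1)) := by rw [e4]; ring
  calc Dc * (((1-r) ^ (1-γ) - 1) / (γ-1))
      ≤ Dc * ((2 ^ (γ-1) * (1 - r^2) ^ (-(γ-1))) / (γ-1)) := by
        apply mul_le_mul_of_nonneg_left _ hDc
        apply div_le_div_of_nonneg_right _ hγ0.le
        linarith
    _ = (Dc * 2 ^ (γ-1) / (γ-1)) * (1 - r ^ 2) ^ (-(γ-1)) := by ring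
end DECAY

section DECITER

lemma decay_iter {β : ℝ} (hβ : 0 < β) (m : ℕ) :
    ∃ K : ℝ, 0 ≤ K ∧ ∀ (Dc : ℝ) (F : ℂ → ℂ), 0 ≤ Dc → DifferentiableOn ℂ F UDisk →
      (∀ w ∈ UDisk, Complex.abs (F w) ≤ Dc * (1 - Complex.abs w ^ 2) ^ (-(β + m))) →
      ∀ z ∈ UDisk, Complex.abs (intOp^[m] F z) ≤ Dc * K * (1 - Complex.abs z ^ 2) ^ (-β) := by
  induction m with
  | zero =>
    refine ⟨1, zero_le_one, ?_⟩
    intro Dc F hDc hF hb z hz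
    have := hb z hz
    simpa using this
  | succ k ih =>
    obtain ⟨K, hK0, hK⟩ := ih
    refine ⟨(2 ^ (β + k) / (β + k)) * K, by positivity, ?_⟩
    intro Dc F hDc hF hb z hz
    have hγ : (1:ℝ) < β + (k+1) := by
      have : (0:ℝ) ≤ k := Nat.cast_nonneg k
      push_cast
      linarith
    have hb' : ∀ w ∈ UDisk, Complex.abs (F w) ≤ Dc * (1 - Complex.abs w ^ 2) ^ (-(β + (k+1):ℝ)) := by
      intro w hw
      have := hb w hw
      convert this using 3
      push_cast
      ring
    have hd := decay_intOp hF hγ hDc hb'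
    have he : (β + (k+1) - 1 : ℝ) = β + k := by push_cast; ring
    rw [he] at hd
    have hstep : ∀ w ∈ UDisk, Complex.abs (intOp F w) ≤
        (Dc * 2 ^ (β + (k:ℝ)) / (β + k)) * (1 - Complex.abs w ^ 2) ^ (-(β + (k:ℝ))) := hd
    have hdc' : 0 ≤ Dc * 2 ^ (β + (k:ℝ)) / (β + k) := by positivity
    have := hK (Dc * 2 ^ (β + (k:ℝ)) / (β + k)) (intOp F) hdc' (intOp_diffOn hF) hstep
    rw [Function.iterate_succ_apply]
    calc Complex.abs (intOp^[k] (intOp F) z)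
        ≤ (Dc * 2 ^ (β + (k:ℝ)) / (β + k)) * K * (1 - Complex.abs z ^ 2) ^ (-β) := this z hz
      _ = Dc * ((2 ^ (β + (k:ℝ)) / (β + k)) * K) * (1 - Complex.abs z ^ 2) ^ (-β) := by ring

lemma grow_deriv {F : ℂ → ℂ} (hF : DifferentiableOn ℂ F UDisk) {γ C : ℝ} (hγ : 0 ≤ γ)
    (hC : 0 ≤ C) (hb : ∀ w ∈ UDisk, (1 - Complex.abs w ^ 2) ^ γ * Complex.abs (F w) ≤ C) :
    ∀ z ∈ UDisk, (1 - Complex.abs z ^ 2) ^ (γ+1) * Complex.abs (deriv F z) ≤ 4 ^ (γ+1) * C := by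
  intro z hz
  have hz1 : Complex.abs z < 1 := mem_UDisk.1 hz
  set ρ : ℝ := (1 - Complex.abs z)/2 with hρdef
  have hρ0 : 0 < ρ := by rw [hρdef]; linarith
  have hsub : closedBall z ρ ⊆ UDisk := by
    intro w hw
    rw [mem_closedBall, Complex.dist_eq, Complex.norm_eq_abs] at hw
    rw [mem_UDisk]
    calc Complex.abs w = Complex.abs (w - z + z) := by ring_nf
      _ ≤ Complex.abs (w - z) + Complex.abs z := Complex.abs.add_le _ _
      _ ≤ ρ + Complex.abs z := by linarith
      _ < 1 := by rw [hρdef]; linarith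
  have hdc : DiffContOnCl ℂ F (ball z ρ) := by
    apply DifferentiableOn.diffContOnCl
    rw [closure_ball z hρ0.ne']
    exact hF.mono hsub
  have hsp : ∀ w ∈ sphere z ρ, ‖F w‖ ≤ C * ρ ^ (-γ) := by
    intro w hw
    have hwD : w ∈ UDisk := hsub (sphere_subset_closedBall hw)
    have h1 : Complex.abs (F w) ≤ C * (1 - Complex.abs w ^ 2) ^ (-γ) :=
      le_mul_weight (wpos hwD) (Complex.abs.nonneg _) (hb w hwD)
    have hwa : Complex.abs w ≤ Complex.abs z + ρ := by
      rw [mem_sphere_iff_norm] at hw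
      calc Complex.abs w = Complex.abs (w - z + z) := by ring_nf
        _ ≤ Complex.abs (w - z) + Complex.abs z := Complex.abs.add_le _ _
        _ = ρ + Complex.abs z := by rw [← hw, Complex.norm_eq_abs]
        _ = Complex.abs z + ρ := by ring
    have hρw : ρ ≤ 1 - Complex.abs w ^ 2 := by
      have h2 : Complex.abs w ≤ (1 + Complex.abs z)/2 := by rw [hρdef] at hwa; linarith
      have h3 : Complex.abs w ^ 2 ≤ Complex.abs w := by
        nlinarith [Complex.abs.nonneg w, (mem_UDisk.1 hwD).le]
      rw [hρdef]
      linarith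
    have hflip : (1 - Complex.abs w ^ 2) ^ (-γ) ≤ ρ ^ (-γ) := weight_flip hρ0 hρw hγ
    rw [Complex.norm_eq_abs]
    exact le_trans h1 (mul_le_mul_of_nonneg_left hflip hC)
  have hcd := Complex.norm_deriv_le_of_forall_mem_sphere_norm_le hρ0 hdc hsp
  rw [Complex.norm_eq_abs] at hcd
  -- combine
  have h4ρ : 1 - Complex.abs z ^ 2 ≤ 4 * ρ := by
    rw [hρdef]
    nlinarith [Complex.abs.nonneg z]
  have hwz : 0 < 1 - Complex.abs z ^ 2 := wpos hz
  calc (1 - Complex.abs z ^ 2) ^ (γ+1) * Complex.abs (deriv F z)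
      ≤ (4*ρ) ^ (γ+1) * (C * ρ ^ (-γ) / ρ) := by
        apply mul_le_mul (Real.rpow_le_rpow hwz.le h4ρ (by linarith)) hcd
          (Complex.abs.nonneg _) (Real.rpow_nonneg (by linarith) _)
    _ = 4 ^ (γ+1) * C * (ρ ^ (γ+1) * (ρ ^ (-γ) / ρ)) := by
        rw [Real.mul_rpow (by norm_num) hρ0.le]
        ring
    _ = 4 ^ (γ+1) * C := by
        have e1 : ρ ^ (γ+1) * ρ ^ (-γ) = ρ := by
          rw [← Real.rpow_add hρ0, show γ+1+-γ = (1:ℝ) by ring, Real.rpow_one]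
        have : ρ ^ (γ+1) * (ρ ^ (-γ) / ρ) = 1 := by
          rw [mul_div_assoc', e1, div_self hρ0.ne']
        rw [this, mul_one]

lemma grow_iter : ∀ m : ℕ, ∀ γ : ℝ, 0 < γ → ∀ h : ℂ → ℂ, DifferentiableOn ℂ h UDisk →
    (∃ C : ℝ, ∀ z ∈ UDisk, (1 - Complex.abs z ^ 2) ^ γ
        * Complex.abs (intOp^[m] h z) ≤ C) →
    ∃ C' : ℝ, ∀ z ∈ UDisk, (1 - Complex.abs z ^ 2) ^ (γ + m) * Complex.abs (h z) ≤ C' := by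
  intro m
  induction m with
  | zero =>
    intro γ hγ0 h hh ⟨C, hC⟩
    exact ⟨C, fun z hz => by simpa using hC z hz⟩
  | succ k ih =>
    intro γ hγ0 h hh ⟨C, hC⟩
    set C₁ := max C 0 with hC₁
    have hC₁0 : 0 ≤ C₁ := le_max_right _ _
    have hC1 : ∀ z ∈ UDisk, (1 - Complex.abs z ^ 2) ^ γ
        * Complex.abs (intOp^[k+1] h z) ≤ C₁ := fun z hz =>
      le_trans (hC z hz) (le_max_left _ _)
    have hgd := grow_deriv (iter_diffOn hh (k+1)) hγ0.le hC₁0 hC1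
    have hnew : ∀ z ∈ UDisk, (1 - Complex.abs z ^ 2) ^ (γ+1)
        * Complex.abs (intOp^[k] h z) ≤ 4 ^ (γ+1) * C₁ := by
      intro z hz
      have := hgd z hz
      rwa [deriv_iter hh k hz] at this
    obtain ⟨C', hC'⟩ := ih (γ+1) (by linarith) h hh ⟨4 ^ (γ+1) * C₁, hnew⟩
    refine ⟨C', fun z hz => ?_⟩
    have := hC' z hz
    rw [show γ + ((k+1:ℕ):ℝ) = (γ+1) + (k:ℝ) by push_cast; ring]
    exact this

end DECITER

section NORMS

lemma weight_cancel {x c : ℝ} (hx : 0 < x) : x ^ c * x ^ (-c) = 1 := by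
  rw [← Real.rpow_add hx]; simp

lemma bSemi_nonneg (α : ℝ) (f : ℂ → ℂ) : 0 ≤ bSemi α f :=
  Real.iSup_nonneg (fun z => mul_nonneg (Real.rpow_nonneg (wpos z.2).le _)
    (Complex.abs.nonneg _))

lemma bNorm_nonneg (α : ℝ) (f : ℂ → ℂ) : 0 ≤ bNorm α f :=
  add_nonneg (Complex.abs.nonneg _) (bSemi_nonneg α f)

lemma bSemi_le {α : ℝ} {f : ℂ → ℂ} {B : ℝ} (hB0 : 0 ≤ B)
    (hB : ∀ z ∈ UDisk, (1 - Complex.abs z ^ 2) ^ α * Complex.abs (deriv f z) ≤ B) :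
    bSemi α f ≤ B :=
  ciSup_le (fun z => hB z z.2)

lemma memBloch_term_le {α : ℝ} {f : ℂ → ℂ} (hf : MemBloch α f) :
    ∀ z ∈ UDisk, (1 - Complex.abs z ^ 2) ^ α * Complex.abs (deriv f z) ≤ bSemi α f := by
  obtain ⟨C, hC⟩ := hf.2
  intro z hz
  have hbdd : BddAbove (Set.range fun w : ↥UDisk =>
      (1 - Complex.abs (w:ℂ) ^ 2) ^ α * Complex.abs (deriv f (w:ℂ))) := by
    refine ⟨C, ?_⟩
    rintro x ⟨w, rfl⟩
    exact hC w w.2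
  exact le_ciSup hbdd (⟨z, hz⟩ : ↥UDisk)

lemma abs_le_bNorm {α : ℝ} {f : ℂ → ℂ} (hf : MemBloch α f) (hα0 : 0 < α) (hα1 : α < 1) :
    ∀ z ∈ UDisk, Complex.abs (f z) ≤ bNorm α f * (1 + 1/(1-α)) := by
  intro z hz
  have h1 := sup_bound hα0 hα1 hf.1 (memBloch_term_le hf) hz
  have h2 : Complex.abs (f 0) ≤ bNorm α f := by
    have := bSemi_nonneg α f
    rw [bNorm, Complex.norm_eq_abs]; linarith
  have h3 : bSemi α f ≤ bNorm α f := by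
    have := Complex.abs.nonneg (f 0)
    rw [bNorm, Complex.norm_eq_abs]; linarith
  have h1α : (0:ℝ) < 1 - α := by linarith
  have := bNorm_nonneg α f
  calc Complex.abs (f z) ≤ Complex.abs (f 0) + bSemi α f / (1-α) := h1
    _ ≤ bNorm α f + bNorm α f * (1/(1-α)) := by
        have : bSemi α f / (1-α) ≤ bNorm α f * (1/(1-α)) := by
          rw [mul_one_div]
          exact (div_le_div_iff_of_pos_right h1α).2 h3
        linarith
    _ = bNorm α f * (1 + 1/(1-α)) := by ring

lemma exponent_eq {n : ℕ} (hn : 1 ≤ n) {β : ℝ} : (n:ℝ) + β - 1 = β + ((n-1:ℕ):ℝ) := by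
  rw [Nat.cast_sub hn]
  push_cast
  ring

lemma Ig_eq (g f : ℂ → ℂ) (n : ℕ) : Ig g n 0 f = intOp^[n] (fun z => f z * g z) := by
  simp only [Ig, iteratedDeriv_zero]

lemma main1 {α β : ℝ} (hα0 : 0 < α) (hα1 : α < 1) (hβ : 0 < β) {n : ℕ} (hn : 1 ≤ n)
    {g : ℂ → ℂ} (hg : DifferentiableOn ℂ g UDisk)
    (hR : ∃ C : ℝ, ∀ z ∈ UDisk,
      (1 - Complex.abs z ^ 2) ^ ((n : ℝ) + β - 1) * Complex.abs (g z) ≤ C) :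
    BoundedOp α β (Ig g n 0) := by
  obtain ⟨C₀, hC₀⟩ := hR
  set C := max C₀ 0 with hCdef
  have hC0 : 0 ≤ C := le_max_right _ _
  have hC : ∀ z ∈ UDisk, (1 - Complex.abs z ^ 2) ^ ((n : ℝ) + β - 1) * Complex.abs (g z) ≤ C :=
    fun z hz => le_trans (hC₀ z hz) (le_max_left _ _)
  obtain ⟨K, hK0, hK⟩ := decay_iter hβ (n-1)
  have h1α : (0:ℝ) < 1 - α := by linarith
  have hcα : (0:ℝ) ≤ 1 + 1/(1-α) := by positivity
  set Cst : ℝ := (1 + 1/(1-α)) * C * K + 1 with hCst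
  have hCst0 : 0 < Cst := by
    have : 0 ≤ (1 + 1/(1-α)) * C * K := by positivity
    rw [hCst]; linarith
  refine ⟨Cst, hCst0, ?_⟩
  intro f hf
  set N := bNorm α f with hNdef
  have hN0 : 0 ≤ N := bNorm_nonneg α f
  set h : ℂ → ℂ := fun z => f z * g z with hhdef
  have hh : DifferentiableOn ℂ h UDisk := hf.1.mul hg
  have hD0 : 0 ≤ N * (1 + 1/(1-α)) * C := by positivity
  have hhb : ∀ w ∈ UDisk, Complex.abs (h w) ≤
      (N * (1 + 1/(1-α)) * C) * (1 - Complex.abs w ^ 2) ^ (-(β + ((n-1:ℕ):ℝ))) := by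
    intro w hw
    have hgb : Complex.abs (g w) ≤ C * (1 - Complex.abs w ^ 2) ^ (-((n:ℝ) + β - 1)) :=
      le_mul_weight (wpos hw) (Complex.abs.nonneg _) (hC w hw)
    have hfb := abs_le_bNorm hf hα0 hα1 w hw
    rw [hhdef]
    simp only [map_mul]
    rw [← exponent_eq hn]
    calc Complex.abs (f w) * Complex.abs (g w)
        ≤ (N * (1 + 1/(1-α))) * (C * (1 - Complex.abs w ^ 2) ^ (-((n:ℝ) + β - 1))) := by
          apply mul_le_mul hfb hgb (Complex.abs.nonneg _) (by positivity)
      _ = (N * (1 + 1/(1-α)) * C) * (1 - Complex.abs w ^ 2) ^ (-((n:ℝ) + β - 1)) := by ring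
  have hdec := hK _ h hD0 hh hhb
  have hTeq : Ig g n 0 f = intOp^[n] h := Ig_eq g f n
  have hn' : n - 1 + 1 = n := Nat.succ_pred_eq_of_pos hn
  have hdiff : DifferentiableOn ℂ (Ig g n 0 f) UDisk := by
    rw [hTeq]; exact iter_diffOn hh n
  have hderiv : ∀ z ∈ UDisk, deriv (Ig g n 0 f) z = intOp^[n-1] h z := by
    intro z hz
    rw [hTeq, ← hn']
    exact deriv_iter hh (n-1) hz
  have hterm : ∀ z ∈ UDisk, (1 - Complex.abs z ^ 2) ^ β * Complex.abs (deriv (Ig g n 0 f) z)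
      ≤ N * (1 + 1/(1-α)) * C * K := by
    intro z hz
    rw [hderiv z hz]
    calc (1 - Complex.abs z ^ 2) ^ β * Complex.abs (intOp^[n-1] h z)
        ≤ (1 - Complex.abs z ^ 2) ^ β *
          ((N * (1 + 1/(1-α)) * C) * K * (1 - Complex.abs z ^ 2) ^ (-β)) := by
          apply mul_le_mul_of_nonneg_left (hdec z hz) (Real.rpow_nonneg (wpos hz).le _)
      _ = (N * (1 + 1/(1-α)) * C * K) *
          ((1 - Complex.abs z ^ 2) ^ β * (1 - Complex.abs z ^ 2) ^ (-β)) := by ring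
      _ = N * (1 + 1/(1-α)) * C * K := by rw [weight_cancel (wpos hz), mul_one]
  have hmem : MemBloch β (Ig g n 0 f) := ⟨hdiff, _, hterm⟩
  refine ⟨hmem, ?_⟩
  have hzero : Ig g n 0 f 0 = 0 := by rw [hTeq]; exact iter_zero_at0 hn
  have hbn : bNorm β (Ig g n 0 f) ≤ N * (1 + 1/(1-α)) * C * K := by
    rw [bNorm, hzero, norm_zero]
    rw [zero_add]
    exact bSemi_le (by positivity) hterm
  calc bNorm β (Ig g n 0 f) ≤ N * (1 + 1/(1-α)) * C * K := hbn
    _ = ((1 + 1/(1-α)) * C * K) * N := by ring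
    _ ≤ Cst * N := by
        apply mul_le_mul_of_nonneg_right _ hN0
        rw [hCst]; linarith
    _ = Cst * bNorm α f := rfl

lemma main2 {α β : ℝ} (hβ : 0 < β) {n : ℕ} (hn : 1 ≤ n)
    {g : ℂ → ℂ} (hg : DifferentiableOn ℂ g UDisk)
    (hB : BoundedOp α β (Ig g n 0)) :
    ∃ C : ℝ, ∀ z ∈ UDisk,
      (1 - Complex.abs z ^ 2) ^ ((n : ℝ) + β - 1) * Complex.abs (g z) ≤ C := by
  obtain ⟨C, -, hC⟩ := hB
  have hone : MemBloch α (fun _ : ℂ => (1:ℂ)) := by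
    refine ⟨differentiableOn_const _, 0, ?_⟩
    intro z hz
    simp [deriv_const']
  obtain ⟨hmem, -⟩ := hC _ hone
  set h1 : ℂ → ℂ := fun z => (1:ℂ) * g z with hh1def
  have hh1 : DifferentiableOn ℂ h1 UDisk := (differentiableOn_const _).mul hg
  have hTeq : Ig g n 0 (fun _ : ℂ => (1:ℂ)) = intOp^[n] h1 := Ig_eq g _ n
  obtain ⟨C₂, hC₂⟩ := hmem.2
  have hn' : n - 1 + 1 = n := Nat.succ_pred_eq_of_pos hn
  have hkey : ∀ z ∈ UDisk, (1 - Complex.abs z ^ 2) ^ β * Complex.abs (intOp^[n-1] h1 z) ≤ C₂ := by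
    intro z hz
    have := hC₂ z hz
    rw [hTeq, ← hn', deriv_iter hh1 (n-1) hz] at this
    exact this
  obtain ⟨C', hC'⟩ := grow_iter (n-1) β hβ h1 hh1 ⟨C₂, hkey⟩
  refine ⟨C', fun z hz => ?_⟩
  have := hC' z hz
  rw [exponent_eq hn]
  simpa [hh1def] using this

end NORMS

section EXTRACT

lemma extract {α M : ℝ} (hα0 : 0 < α) (hα1 : α < 1) (F : ℕ → ℂ → ℂ)
    (hF : ∀ j, MemBloch α (F j)) (hFb : ∀ j, bNorm α (F j) ≤ M) :
    ∃ (φ : ℕ → ℕ) (f : ℂ → ℂ), StrictMono φ ∧ MemBloch α f ∧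
      TendstoUniformlyOn (fun j => F (φ j)) f atTop UDisk := by
  have hM0 : 0 ≤ M := le_trans (bNorm_nonneg α (F 0)) (hFb 0)
  have h1α : (0:ℝ) < 1 - α := by linarith
  have hbsemi : ∀ j, bSemi α (F j) ≤ M := fun j => by
    have h1 := Complex.abs.nonneg ((F j) 0)
    have h2 := hFb j
    rw [bNorm, Complex.norm_eq_abs] at h2; linarith
  have hsemi : ∀ j, ∀ z ∈ UDisk, (1 - Complex.abs z ^ 2) ^ α * Complex.abs (deriv (F j) z) ≤ M :=
    fun j z hz => le_trans (memBloch_term_le (hF j) z hz) (hbsemi j)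
  set M' : ℝ := M * (1 + 1/(1-α)) with hM'def
  have hM'0 : 0 ≤ M' := by positivity
  have hsup : ∀ j, ∀ z ∈ UDisk, Complex.abs (F j z) ≤ M' := by
    intro j z hz
    apply le_trans (abs_le_bNorm (hF j) hα0 hα1 z hz)
    apply mul_le_mul_of_nonneg_right (hFb j) (by positivity)
  set cE : ℝ := 2/(1-α) + 1 with hcEdef
  have hcE0 : 0 ≤ cE := by positivity
  have hequi : ∀ j, ∀ z ∈ UDisk, ∀ w ∈ UDisk, ∀ δ : ℝ, 0 < δ → δ ≤ 1 →
      Complex.abs (z - w) ≤ δ → Complex.abs (F j z - F j w) ≤ M * cE * δ ^ (1-α) :=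
    fun j z hz w hw δ hδ0 hδ1 hzw =>
      equi_bound hα0 hα1 (hF j).1 (hsemi j) hz hw hδ0 hδ1 hzw
  -- dense sequence
  set q : ℕ → ℂ := fun k => ((TopologicalSpace.denseSeq ↥UDisk k : ↥UDisk) : ℂ) with hqdef
  have hqD : ∀ k, q k ∈ UDisk := fun k => (TopologicalSpace.denseSeq ↥UDisk k).2
  have hqdense : ∀ z ∈ UDisk, ∀ r : ℝ, 0 < r → ∃ k, dist z (q k) < r := by
    intro z hz r hr
    have hdr := TopologicalSpace.denseRange_denseSeq ↥UDisk
    have hmem : (⟨z, hz⟩ : ↥UDisk) ∈ closure (Set.range (TopologicalSpace.denseSeq ↥UDisk)) := by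
      rw [hdr.closure_range]; trivial
    rw [Metric.mem_closure_iff] at hmem
    obtain ⟨b, ⟨k, rfl⟩, hb⟩ := hmem r hr
    exact ⟨k, by rwa [Subtype.dist_eq] at hb⟩
  -- extraction via product compactness
  set 𝒦 : Set (ℕ → ℂ) := {v | ∀ k, v k ∈ closedBall (0:ℂ) M'} with h𝒦
  have hcomp : IsCompact 𝒦 := isCompact_pi_infinite (fun k => isCompact_closedBall _ _)
  set V : ℕ → (ℕ → ℂ) := fun j k => F j (q k) with hVdef
  have hV : ∀ j, V j ∈ 𝒦 := by
    intro j k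
    rw [mem_closedBall, dist_zero_right, Complex.norm_eq_abs]
    exact hsup j (q k) (hqD k)
  obtain ⟨L, -, φ, hφ, hconv⟩ := hcomp.isSeqCompact hV
  have hcoord : ∀ k, Tendsto (fun j => F (φ j) (q k)) atTop (𝓝 (L k)) := by
    intro k
    exact (tendsto_pi_nhds.1 hconv) k
  -- uniform Cauchy
  have hUC : UniformCauchySeqOn (fun j => F (φ j)) atTop UDisk := by
    rw [Metric.uniformCauchySeqOn_iff]
    intro ε hε
    -- choose δ
    set x : ℝ := ε / (3 * (M * cE + 1)) with hxdef
    have hx0 : 0 < x := by positivity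
    set δ : ℝ := min 1 (x ^ (1/(1-α))) with hδdef
    have hδ0 : 0 < δ := lt_min one_pos (Real.rpow_pos_of_pos hx0 _)
    have hδ1 : δ ≤ 1 := min_le_left _ _
    have hδe : M * cE * δ ^ (1-α) < ε / 3 := by
      have h1 : δ ^ (1-α) ≤ (x ^ (1/(1-α))) ^ (1-α) :=
        Real.rpow_le_rpow hδ0.le (min_le_right _ _) (by linarith)
      have h2 : (x ^ (1/(1-α))) ^ (1-α) = x := by
        rw [← Real.rpow_mul hx0.le, one_div, inv_mul_cancel₀ h1α.ne', Real.rpow_one]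
      rw [h2] at h1
      have h3 : M * cE * δ ^ (1-α) ≤ (M * cE) * x :=
        mul_le_mul_of_nonneg_left h1 (by positivity)
      have h4 : (M * cE) * x < ε / 3 := by
        have hpos : (0:ℝ) < M * cE + 1 := by positivity
        have he : (M * cE + 1) * x = ε / 3 := by
          rw [hxdef]; field_simp
        have : (M * cE) * x = (M * cE + 1) * x - x := by ring
        rw [this, he]; linarith
      exact lt_of_le_of_lt h3 h4
    -- finite net
    have hcover : closedBall (0:ℂ) 1 ⊆ ⋃ k, ball (q k) δ := by
      intro w hw
      have hwc : w ∈ closure UDisk := by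
        rw [UDisk, closure_ball (0:ℂ) one_ne_zero]
        exact hw
      rw [Metric.mem_closure_iff] at hwc
      obtain ⟨z, hzD, hz⟩ := hwc (δ/2) (by linarith)
      obtain ⟨k, hk⟩ := hqdense z hzD (δ/2) (by linarith)
      rw [Set.mem_iUnion]
      refine ⟨k, ?_⟩
      rw [mem_ball]
      calc dist w (q k) ≤ dist w z + dist z (q k) := dist_triangle _ _ _
        _ < δ/2 + δ/2 := by linarith
        _ = δ := by ring
    obtain ⟨t, ht⟩ := (isCompact_closedBall (0:ℂ) 1).elim_finite_subcover
      (fun k => ball (q k) δ) (fun k => isOpen_ball) hcover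
    -- choose N
    have hNk : ∀ k : ℕ, ∃ N, ∀ m ≥ N, ∀ m' ≥ N,
        dist (F (φ m) (q k)) (F (φ m') (q k)) < ε / 3 :=
      fun k => Metric.cauchySeq_iff.mp (hcoord k).cauchySeq (ε/3) (by linarith)
    set Nf : ℕ → ℕ := fun k => (hNk k).choose with hNfdef
    set N : ℕ := t.sup Nf with hNdef
    refine ⟨N, ?_⟩
    intro m hm m' hm' z hzD
    -- find k
    have hz1 : z ∈ closedBall (0:ℂ) 1 := by
      rw [mem_closedBall, dist_zero_right, Complex.norm_eq_abs]
      exact (mem_UDisk.1 hzD).le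
    obtain ⟨k, hkt, hzk⟩ : ∃ k ∈ t, z ∈ ball (q k) δ := by
      have := ht hz1
      rw [Set.mem_iUnion₂] at this
      obtain ⟨k, hk1, hk2⟩ := this
      exact ⟨k, hk1, hk2⟩
    have hNfk : Nf k ≤ N := Finset.le_sup hkt
    have hmid := (hNk k).choose_spec m (le_trans hNfk hm) m' (le_trans hNfk hm')
    have hzq : Complex.abs (z - q k) ≤ δ := by
      rw [mem_ball, Complex.dist_eq] at hzk
      exact hzk.le
    have he1 : Complex.abs (F (φ m) z - F (φ m) (q k)) ≤ M * cE * δ ^ (1-α) :=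
      hequi (φ m) z hzD (q k) (hqD k) δ hδ0 hδ1 hzq
    have he2 : Complex.abs (F (φ m') z - F (φ m') (q k)) ≤ M * cE * δ ^ (1-α) :=
      hequi (φ m') z hzD (q k) (hqD k) δ hδ0 hδ1 hzq
    rw [Complex.dist_eq]
    calc Complex.abs (F (φ m) z - F (φ m') z)
        = Complex.abs ((F (φ m) z - F (φ m) (q k)) + (F (φ m) (q k) - F (φ m') (q k))
            + (F (φ m') (q k) - F (φ m') z)) := by ring_nf
      _ ≤ Complex.abs ((F (φ m) z - F (φ m) (q k)) + (F (φ m) (q k) - F (φ m') (q k)))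
            + Complex.abs (F (φ m') (q k) - F (φ m') z) := Complex.abs.add_le _ _
      _ ≤ Complex.abs (F (φ m) z - F (φ m) (q k)) + Complex.abs (F (φ m) (q k) - F (φ m') (q k))
            + Complex.abs (F (φ m') (q k) - F (φ m') z) := by
          have := Complex.abs.add_le (F (φ m) z - F (φ m) (q k)) (F (φ m) (q k) - F (φ m') (q k))
          linarith
      _ < ε := by
          rw [Complex.dist_eq] at hmid
          have he2' : Complex.abs (F (φ m') (q k) - F (φ m') z) ≤ M * cE * δ ^ (1-α) := by
            rw [← Complex.abs.map_neg]
            simpa using he2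
          have t1 : Complex.abs (F (φ m) z - F (φ m) (q k))
              + Complex.abs (F (φ m) (q k) - F (φ m') (q k))
              + Complex.abs (F (φ m') (q k) - F (φ m') z) < ε/3 + ε/3 + ε/3 :=
            add_lt_add_of_lt_of_le (add_lt_add_of_le_of_lt (le_trans he1 hδe.le) hmid)
              (le_trans he2' hδe.le)
          exact lt_of_lt_of_le t1 (le_of_eq (by ring))
  -- limit function
  set f : ℂ → ℂ := fun z => limUnder atTop (fun j => F (φ j) z) with hfdef
  have hptw : ∀ z ∈ UDisk, Tendsto (fun j => F (φ j) z) atTop (𝓝 (f z)) := by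
    intro z hz
    have hcs : CauchySeq (fun j => F (φ j) z) := hUC.cauchy_map hz
    exact hcs.tendsto_limUnder
  have hTU : TendstoUniformlyOn (fun j => F (φ j)) f atTop UDisk :=
    hUC.tendstoUniformlyOn_of_tendsto hptw
  have htlu := hTU.tendstoLocallyUniformlyOn
  have hdall : ∀ᶠ j in atTop, DifferentiableOn ℂ (F (φ j)) UDisk :=
    Eventually.of_forall (fun j => (hF (φ j)).1)
  have hfd : DifferentiableOn ℂ f UDisk := htlu.differentiableOn hdall isOpen_UDisk
  have hder := htlu.deriv hdall isOpen_UDisk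
  have hfsemi : ∀ z ∈ UDisk, (1 - Complex.abs z ^ 2) ^ α * Complex.abs (deriv f z) ≤ M := by
    intro z hz
    have hd : Tendsto (fun j => deriv (F (φ j)) z) atTop (𝓝 (deriv f z)) :=
      hder.tendsto_at hz
    have habs : Tendsto (fun j => (1 - Complex.abs z ^ 2) ^ α * Complex.abs (deriv (F (φ j)) z))
        atTop (𝓝 ((1 - Complex.abs z ^ 2) ^ α * Complex.abs (deriv f z))) := by
      apply Tendsto.const_mul
      have := hd.norm
      simpa [Complex.norm_eq_abs] using this
    exact le_of_tendsto habs (Eventually.of_forall (fun j => hsemi (φ j) z hz))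
  exact ⟨φ, f, hφ, ⟨hfd, M, hfsemi⟩, hTU⟩

end EXTRACT

section MAIN3

lemma main3 {α β : ℝ} (hα0 : 0 < α) (hα1 : α < 1) (hβ : 0 < β) {n : ℕ} (hn : 1 ≤ n)
    {g : ℂ → ℂ} (hg : DifferentiableOn ℂ g UDisk)
    (hR : ∃ C : ℝ, ∀ z ∈ UDisk,
      (1 - Complex.abs z ^ 2) ^ ((n : ℝ) + β - 1) * Complex.abs (g z) ≤ C) :
    CompactOp α β (Ig g n 0) := by
  have hBdd := main1 hα0 hα1 hβ hn hg hR
  refine ⟨hBdd, ?_⟩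
  intro F M hF hFb
  obtain ⟨φ, f, hφ, hfB, hTU⟩ := extract hα0 hα1 F hF hFb
  obtain ⟨Cb, hCb0, hCbf⟩ := hBdd
  obtain ⟨hTfmem, -⟩ := hCbf f hfB
  refine ⟨φ, Ig g n 0 f, hφ, hTfmem, ?_⟩
  -- setup constants
  obtain ⟨C₀, hC₀⟩ := hR
  set C := max C₀ 0 with hCdef
  have hC0 : 0 ≤ C := le_max_right _ _
  have hC : ∀ z ∈ UDisk, (1 - Complex.abs z ^ 2) ^ ((n : ℝ) + β - 1) * Complex.abs (g z) ≤ C :=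
    fun z hz => le_trans (hC₀ z hz) (le_max_left _ _)
  obtain ⟨K, hK0, hK⟩ := decay_iter hβ (n-1)
  have hn' : n - 1 + 1 = n := Nat.succ_pred_eq_of_pos hn
  rw [Metric.tendsto_atTop]
  intro ε hε
  set δ : ℝ := ε / (2 * (C * K + 1)) with hδdef
  have hδ0 : 0 < δ := by positivity
  obtain ⟨N, hN⟩ := Filter.eventually_atTop.1 ((Metric.tendstoUniformlyOn_iff.1 hTU) δ hδ0)
  refine ⟨N, ?_⟩
  intro j hj
  have hNj := hN j hj
  set u : ℂ → ℂ := F (φ j) with hudef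
  have huB : MemBloch α u := hF (φ j)
  -- the difference function
  set d : ℂ → ℂ := Ig g n 0 u - Ig g n 0 f with hddef
  have hTueq : Ig g n 0 u = intOp^[n] (fun y => u y * g y) := Ig_eq g u n
  have hTfeq : Ig g n 0 f = intOp^[n] (fun y => f y * g y) := Ig_eq g f n
  have hug : DifferentiableOn ℂ (fun y => u y * g y) UDisk := huB.1.mul hg
  have hfg : DifferentiableOn ℂ (fun y => f y * g y) UDisk := hfB.1.mul hg
  -- value at 0
  have hd0 : d 0 = 0 := by
    rw [hddef, Pi.sub_apply, hTueq, hTfeq, iter_zero_at0 hn, iter_zero_at0 hn, sub_zero]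
  -- bound for the weighted derivative
  have hwg : DifferentiableOn ℂ (fun y => (u y - f y) * g y) UDisk := (huB.1.sub hfB.1).mul hg
  have hwb : ∀ w ∈ UDisk, Complex.abs ((u w - f w) * g w) ≤
      (δ * C) * (1 - Complex.abs w ^ 2) ^ (-(β + ((n-1:ℕ):ℝ))) := by
    intro w hw
    have hgb : Complex.abs (g w) ≤ C * (1 - Complex.abs w ^ 2) ^ (-((n:ℝ) + β - 1)) :=
      le_mul_weight (wpos hw) (Complex.abs.nonneg _) (hC w hw)
    have huf : Complex.abs (u w - f w) ≤ δ := by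
      have := hNj w hw
      rw [Complex.dist_eq, Complex.norm_eq_abs] at this
      rw [← Complex.abs.map_neg]
      simpa [hudef] using this.le
    rw [← exponent_eq hn, map_mul]
    calc Complex.abs (u w - f w) * Complex.abs (g w)
        ≤ δ * (C * (1 - Complex.abs w ^ 2) ^ (-((n:ℝ) + β - 1))) :=
          mul_le_mul huf hgb (Complex.abs.nonneg _) hδ0.le
      _ = (δ * C) * (1 - Complex.abs w ^ 2) ^ (-((n:ℝ) + β - 1)) := by ring
  have hdec := hK (δ * C) _ (by positivity) hwg hwb
  have hterm : ∀ z ∈ UDisk, (1 - Complex.abs z ^ 2) ^ β * Complex.abs (deriv d z) ≤ δ * C * K := by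
    intro z hz
    have hdat1 : DifferentiableAt ℂ (Ig g n 0 u) z := by
      rw [hTueq]
      exact (iter_diffOn hug n).differentiableAt (isOpen_UDisk.mem_nhds hz)
    have hdat2 : DifferentiableAt ℂ (Ig g n 0 f) z := by
      rw [hTfeq]
      exact (iter_diffOn hfg n).differentiableAt (isOpen_UDisk.mem_nhds hz)
    have hds : deriv d z = deriv (Ig g n 0 u) z - deriv (Ig g n 0 f) z := by
      rw [hddef]
      exact deriv_sub hdat1 hdat2
    have hd1 : deriv (Ig g n 0 u) z = intOp^[n-1] (fun y => u y * g y) z := by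
      rw [hTueq, ← hn']; exact deriv_iter hug (n-1) hz
    have hd2 : deriv (Ig g n 0 f) z = intOp^[n-1] (fun y => f y * g y) z := by
      rw [hTfeq, ← hn']; exact deriv_iter hfg (n-1) hz
    have hsub := iter_sub hug hfg (n-1) z hz
    have hfun : ((fun y => u y * g y) - (fun y => f y * g y)) = fun y => (u y - f y) * g y := by
      funext y
      simp [Pi.sub_apply]
      ring
    rw [hfun] at hsub
    have habs : Complex.abs (deriv d z) = Complex.abs (intOp^[n-1] (fun y => (u y - f y) * g y) z) := by
      rw [hds, hd1, hd2, hsub]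
    rw [habs]
    calc (1 - Complex.abs z ^ 2) ^ β * Complex.abs (intOp^[n-1] (fun y => (u y - f y) * g y) z)
        ≤ (1 - Complex.abs z ^ 2) ^ β * ((δ * C) * K * (1 - Complex.abs z ^ 2) ^ (-β)) :=
          mul_le_mul_of_nonneg_left (hdec z hz) (Real.rpow_nonneg (wpos hz).le _)
      _ = (δ * C * K) * ((1 - Complex.abs z ^ 2) ^ β * (1 - Complex.abs z ^ 2) ^ (-β)) := by ring
      _ = δ * C * K := by rw [weight_cancel (wpos hz), mul_one]
  -- conclude
  have hbn : bNorm β d ≤ δ * C * K := by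
    rw [bNorm, hd0, norm_zero, zero_add]
    exact bSemi_le (by positivity) hterm
  have hbn0 : 0 ≤ bNorm β d := bNorm_nonneg β d
  rw [Real.dist_eq, sub_zero, _root_.abs_of_nonneg hbn0]
  have hfin : δ * (C * K) < ε := by
    have hpos : (0:ℝ) < C * K + 1 := by positivity
    have he : δ * (C * K + 1) = ε / 2 := by
      rw [hδdef]; field_simp
    have h2 : δ * (C * K) = δ * (C * K + 1) - δ := by ring
    rw [h2, he]
    linarith
  calc bNorm β d ≤ δ * C * K := hbn
    _ = δ * (C * K) := by ring
    _ < ε := hfin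

end MAIN3

theorem stmt13 (α β : ℝ) (hα0 : 0 < α) (hα1 : α < 1) (hβ : 0 < β) (n : ℕ)
    (hn : 1 ≤ n) (g : ℂ → ℂ) (hg : DifferentiableOn ℂ g UDisk) :
    (BoundedOp α β (Ig g n 0) ↔ CompactOp α β (Ig g n 0)) ∧
      (BoundedOp α β (Ig g n 0) ↔
        ∃ C : ℝ, ∀ z ∈ UDisk,
          (1 - ‖z‖ ^ 2) ^ ((n : ℝ) + β - 1) * ‖g z‖ ≤ C) := by
  constructor
  · constructor
    · intro hB
      exact main3 hα0 hα1 hβ hn hg (main2 hβ hn hg hB)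
    · intro hC
      exact hC.1
  · constructor
    · intro hB
      exact main2 hβ hn hg hB
    · intro hR
      exact main1 hα0 hα1 hβ hn hg hR
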